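/- For any time step t, the expected total opening cost of the rounding algorithm satisfies E[∑_{i∈F} f_i · Y^t_i] ≤ ∑_{i∈F} f_i · y^t_i, where Y^t_i is the indicator that the algorithm opens facility i at time t. -/

import Mathlib

/-!
Facility `i` can only be opened through a client `j` with `x i j > 0` such that `j` has the
smallest clock among the clients of `i` and `i` has the smallest clock among the facilities of
`j`. The two events depend on disjoint sets of clocks, hence are independent. By the race of
exponential clocks the second one has probability `o i / ∑_{i' ∼ j} o i' = o i = y i`, and the
first ones are disjoint up to ties, which have probability zero, so their probabilities sum to at
most one. Hence `i` is opened with probability at most `y i`.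
-/

open MeasureTheory ProbabilityTheory
open scoped Classical

namespace ProbabilityTheory

open Set

instance nullSingletonClass_expMeasure (r : ℝ) : NullSingletonClass (expMeasure r) :=
  inferInstanceAs (NullSingletonClass (volume.withDensity _))

lemma expMeasure_eq_withDensity (r : ℝ) :
    expMeasure r = volume.withDensity (exponentialPDF r) :=
  rfl

lemma expMeasure_Ici {r a : ℝ} (hr : 0 < r) (ha : 0 ≤ a) :
    expMeasure r (Ici a) = ENNReal.ofReal (Real.exp (-(r * a))) := by
  have := isProbabilityMeasure_expMeasure hr
  have he : Real.exp (-(r * a)) ≤ 1 := Real.exp_le_one_iff.2 (by nlinarith)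
  rw [measure_congr Ioi_ae_eq_Ici.symm, ← compl_Iic, prob_compl_eq_one_sub measurableSet_Iic,
    ← ofReal_cdf, cdf_expMeasure_eq hr, if_pos ha, ← ENNReal.ofReal_one,
    ← ENNReal.ofReal_sub _ (by linarith), sub_sub_cancel]

lemma lintegral_exp_neg_mul_expMeasure {r b : ℝ} (hr : 0 < r) (hb : 0 ≤ b) :
    ∫⁻ a, ENNReal.ofReal (Real.exp (-(b * a))) ∂expMeasure r = ENNReal.ofReal (r / (r + b)) := by
  have hrb : 0 < r + b := by linarith
  have hpdf : ∀ a, (exponentialPDF r * fun a => ENNReal.ofReal (Real.exp (-(b * a)))) a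
      = ENNReal.ofReal (r / (r + b)) * exponentialPDF (r + b) a := by
    intro a
    simp only [Pi.mul_apply, exponentialPDF_eq]
    split_ifs with ha
    · rw [← ENNReal.ofReal_mul (by positivity), ← ENNReal.ofReal_mul (by positivity)]
      congr 1
      field_simp
      rw [← Real.exp_add]
      ring_nf
    · simp
  rw [expMeasure_eq_withDensity, lintegral_withDensity_eq_lintegral_mul _
      (f := exponentialPDF r) (measurable_exponentialPDFReal r).ennreal_ofReal (by fun_prop),
    lintegral_congr hpdf, lintegral_const_mul _ (f := exponentialPDF (r + b))
      (measurable_exponentialPDFReal _).ennreal_ofReal,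
    lintegral_exponentialPDF_eq_one hrb, mul_one]

lemma ae_nonneg_expMeasure (r : ℝ) : ∀ᵐ a ∂expMeasure r, 0 ≤ a := by
  rw [ae_iff, expMeasure_eq_withDensity]
  simp only [not_le]
  exact (withDensity_apply _ measurableSet_Iio).trans (lintegral_exponentialPDF_of_nonpos le_rfl)

variable {Ω ι κ : Type*}

def ringsFirst (W : ι → Ω → ℝ) (s : Finset ι) (v : ι) : Set Ω :=
  {ω | IsMinOn (fun k => W k ω) s v}

lemma ringsFirst_subtype {p : ι → Prop} {W : ι → Ω → ℝ} {s : Finset ι} (hs : ∀ k ∈ s, p k)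
    {v : ι} (hv : p v) :
    ringsFirst (fun k : Subtype p => W k) (s.subtype p) ⟨v, hv⟩ = ringsFirst W s v := by
  ext ω
  simp only [ringsFirst, mem_ofPred_eq, isMinOn_iff, Finset.mem_coe, Finset.mem_subtype,
    Subtype.forall]
  exact ⟨fun H k hk => H k (hs k hk) hk, fun H k _ hk => H k hk⟩

variable [MeasurableSpace Ω] {μ : Measure Ω}

lemma measurableSet_ringsFirst {W : ι → Ω → ℝ} (hW : ∀ k, Measurable (W k)) (s : Finset ι)
    (v : ι) : MeasurableSet (ringsFirst W s v) := by
  simp only [ringsFirst, isMinOn_iff, Finset.mem_coe, ofPred_forall]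
  exact Finset.measurableSet_biInter s fun k _ => measurableSet_le (hW v) (hW k)

lemma IndepFun.measure_preimage_prodMk [IsFiniteMeasure μ] {α β : Type*} [MeasurableSpace α]
    [MeasurableSpace β] {X : Ω → α} {Y : Ω → β} (h : IndepFun X Y μ) (hX : Measurable X)
    (hY : Measurable Y) {D : Set (α × β)} (hD : MeasurableSet D) :
    μ ((fun ω => (X ω, Y ω)) ⁻¹' D) = ∫⁻ a, μ (Y ⁻¹' (Prod.mk a ⁻¹' D)) ∂μ.map X := by
  rw [← Measure.map_apply (hX.prodMk hY) hD,
    (indepFun_iff_map_prod_eq_prod_map_map hX.aemeasurable hY.aemeasurable).1 h,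
    Measure.prod_apply hD]
  exact lintegral_congr fun a => Measure.map_apply hY (measurable_prodMk_left hD)

lemma IndepFun.measure_setOf_eq_eq_zero [IsFiniteMeasure μ] {X Y : Ω → ℝ} (h : IndepFun X Y μ)
    (hX : Measurable X) (hY : Measurable Y) [NullSingletonClass (μ.map Y)] :
    μ {ω | X ω = Y ω} = 0 := by
  have hslice (a : ℝ) : μ (Y ⁻¹' {a}) = 0 := by
    rw [← Measure.map_apply hY (measurableSet_singleton a), measure_singleton]
  rw [show {ω | X ω = Y ω} = (fun ω => (X ω, Y ω)) ⁻¹' {p : ℝ × ℝ | p.1 = p.2} from rfl,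
    h.measure_preimage_prodMk hX hY (measurableSet_eq_fun measurable_fst measurable_snd)]
  simp [hslice]

lemma iIndepFun.sum_measure_ringsFirst_le_one [IsProbabilityMeasure μ] {W : ι → Ω → ℝ}
    (h : iIndepFun W μ) (hW : ∀ k, Measurable (W k)) (s : Finset ι)
    (hs : ∀ k ∈ s, NullSingletonClass (μ.map (W k))) :
    ∑ v ∈ s, μ (ringsFirst W s v) ≤ 1 := by
  refine (sum_measure_le_measure_univ
    (fun v _ => (measurableSet_ringsFirst hW s v).nullMeasurableSet) ?_).trans_eq measure_univ
  intro v hv w hw hvw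
  have := hs w hw
  refine measure_mono_null (fun ω hω => le_antisymm (hω.1 hw) (hω.2 hv))
    ((h.indepFun hvw).measure_setOf_eq_eq_zero (hW v) (hW w))

lemma iIndepFun.measure_forall_le_eq_ofReal_exp {W : ι → Ω → ℝ} (h : iIndepFun W μ)
    (hW : ∀ k, Measurable (W k)) {t : Finset ι} {r : ι → ℝ} (hr : ∀ k ∈ t, 0 < r k)
    (hlaw : ∀ k ∈ t, μ.map (W k) = expMeasure (r k)) {a : ℝ} (ha : 0 ≤ a) :
    μ {ω | ∀ k ∈ t, a ≤ W k ω} = ENNReal.ofReal (Real.exp (-((∑ k ∈ t, r k) * a))) := by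
  have hset : {ω | ∀ k ∈ t, a ≤ W k ω} = ⋂ k ∈ t, W k ⁻¹' Ici a := by ext; simp
  rw [hset, h.measure_inter_preimage_eq_mul t (fun _ _ => measurableSet_Ici),
    Finset.prod_congr rfl fun k hk => by
      rw [← Measure.map_apply (hW k) measurableSet_Ici, hlaw k hk, expMeasure_Ici (hr k hk) ha],
    ← ENNReal.ofReal_prod_of_nonneg (fun _ _ => (Real.exp_pos _).le), ← Real.exp_sum,
    Finset.sum_mul, ← Finset.sum_neg_distrib]

lemma iIndepFun.measure_ringsFirst [IsProbabilityMeasure μ] {W : ι → Ω → ℝ}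
    (h : iIndepFun W μ) (hW : ∀ k, Measurable (W k)) {s : Finset ι} {v : ι} (hv : v ∈ s)
    {r : ι → ℝ} (hr : ∀ k ∈ s, 0 < r k) (hlaw : ∀ k ∈ s, μ.map (W k) = expMeasure (r k)) :
    μ (ringsFirst W s v) = ENNReal.ofReal (r v / ∑ k ∈ s, r k) := by
  set t := s.erase v
  have hXY : IndepFun (W v) (fun ω (k : t) => W k ω) μ :=
    (h.indepFun_finset {v} t (Finset.disjoint_singleton_left.2 (s.notMem_erase v)) hW).comp
      (measurable_pi_apply (⟨v, Finset.mem_singleton_self v⟩ : ({v} : Finset ι)))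
      measurable_id
  set D : Set (ℝ × (t → ℝ)) := {p | ∀ k, p.1 ≤ p.2 k}
  have hD : MeasurableSet D := by
    simp only [D, ofPred_forall]
    exact MeasurableSet.iInter fun k =>
      measurableSet_le measurable_fst ((measurable_pi_apply k).comp measurable_snd)
  have hevent : ringsFirst W s v = (fun ω => (W v ω, fun k : t => W k ω)) ⁻¹' D := by
    ext ω
    simp only [ringsFirst, isMinOn_iff, D, t, Finset.mem_coe, mem_preimage, mem_ofPred_eq,
      Subtype.forall, Finset.mem_erase]
    refine ⟨fun H k hk => H k hk.2, fun H k hk => ?_⟩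
    rcases eq_or_ne k v with rfl | hkv
    exacts [le_rfl, H k ⟨hkv, hk⟩]
  have hslice : ∀ a, 0 ≤ a → μ ((fun ω (k : t) => W k ω) ⁻¹' (Prod.mk a ⁻¹' D))
      = ENNReal.ofReal (Real.exp (-((∑ k ∈ t, r k) * a))) := fun a ha => by
    rw [← h.measure_forall_le_eq_ofReal_exp hW (fun k hk => hr k (Finset.mem_of_mem_erase hk))
      (fun k hk => hlaw k (Finset.mem_of_mem_erase hk)) ha]
    congr 1
    ext ω
    simp [D, t]
  rw [hevent, hXY.measure_preimage_prodMk (hW v) (measurable_pi_lambda _ fun k => hW k) hD,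
    hlaw v hv, lintegral_congr_ae ((ae_nonneg_expMeasure _).mono hslice),
    lintegral_exp_neg_mul_expMeasure (hr v hv)
      (Finset.sum_nonneg fun k hk => (hr k (Finset.mem_of_mem_erase hk)).le),
    Finset.add_sum_erase s r hv]

lemma iIndepFun.indepFun_inl_inr [Fintype ι] [Fintype κ] {W : ι ⊕ κ → Ω → ℝ}
    (h : iIndepFun W μ) (hW : ∀ k, Measurable (W k)) :
    IndepFun (fun ω k => W (.inl k) ω) (fun ω k => W (.inr k) ω) μ :=
  (h.indepFun_finset (Finset.univ.map .inl) (Finset.univ.map .inr)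
    (by simp [Finset.disjoint_left]) hW).comp
    (φ := fun u k => u ⟨.inl k, by simp⟩) (ψ := fun u k => u ⟨.inr k, by simp⟩)
    (measurable_pi_lambda _ fun _ => measurable_pi_apply _)
    (measurable_pi_lambda _ fun _ => measurable_pi_apply _)

lemma iIndepFun.measure_ringsFirst_inl_inter_inr [Fintype ι] [Fintype κ]
    {W : ι ⊕ κ → Ω → ℝ} (h : iIndepFun W μ) (hW : ∀ k, Measurable (W k))
    (s : Finset ι) (v : ι) (t : Finset κ) (w : κ) :
    μ (ringsFirst (fun k => W (.inl k)) s v ∩ ringsFirst (fun k => W (.inr k)) t w) =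
      μ (ringsFirst (fun k => W (.inl k)) s v) * μ (ringsFirst (fun k => W (.inr k)) t w) :=
  (h.indepFun_inl_inr hW).measure_inter_preimage_eq_mul _ _
    (measurableSet_ringsFirst (fun k => measurable_pi_apply k) s v)
    (measurableSet_ringsFirst (fun k => measurable_pi_apply k) t w)

end ProbabilityTheory

namespace DFL11

noncomputable section

variable {F C : Type*}

/-- Facilities fractionally serving client `j` (neighborhood of `j` in the support graph). -/
def facNbrs [Fintype F] (x : F → C → ℝ) (j : C) : Finset F :=
  Finset.univ.filter fun i => 0 < x i j

/-- Clients fractionally served by facility `i` (neighborhood of `i` in the support graph). -/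
def cliNbrs [Fintype C] (x : F → C → ℝ) (i : F) : Finset C :=
  Finset.univ.filter fun j => 0 < x i j

/-- An element of a nonempty finset minimizing `f`. -/
def argminOn {α : Type*} (f : α → ℝ) (s : Finset α) (h : s.Nonempty) : α :=
  Classical.choose (s.exists_min_image f h)

/-- The connection graph: every vertex points to the neighbor (in the support graph of `x`)
with the smallest clock value (`Q` on facilities, `R` on clients). -/
def nextV [Fintype F] [Fintype C] (x : F → C → ℝ) (Q : F → ℝ) (R : C → ℝ) :
    F ⊕ C → Option (F ⊕ C)
  | Sum.inl i =>
    if h : (cliNbrs x i).Nonempty then some (Sum.inr (argminOn R _ h)) else none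
  | Sum.inr j =>
    if h : (facNbrs x j).Nonempty then some (Sum.inl (argminOn Q _ h)) else none

/-- Follow `next`, accumulating visited vertices and stopping just before revisiting one. -/
def pathAux {α : Type*} [DecidableEq α] (next : α → Option α) :
    ℕ → List α → α → List α
  | 0, vis, v => vis ++ [v]
  | n+1, vis, v =>
    match next v with
    | none => vis ++ [v]
    | some w => if w ∈ vis ++ [v] then vis ++ [v] else pathAux next n (vis ++ [v]) w

/-- The connection path of client `j`: start at `j` and repeatedly follow the unique outgoing
arc of the connection graph, stopping just before revisiting an already visited vertex. -/
def connPath [Fintype F] [Fintype C] [DecidableEq F] [DecidableEq C]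
    (x : F → C → ℝ) (Q : F → ℝ) (R : C → ℝ) (j : C) : List (F ⊕ C) :=
  pathAux (nextV x Q R) (Fintype.card F + Fintype.card C) List.nil (Sum.inr j)

/-- The path `p` traverses the arc `(u, v)`. -/
def traverses {α : Type*} (p : List α) (u v : α) : Prop :=
  ∃ l1 l2 : List α, p = l1 ++ u :: v :: l2

/-- The last facility on a path: the facility to which a client is assigned. -/
def assignedFac (p : List (F ⊕ C)) : Option F :=
  p.reverse.findSome? Sum.getLeft?

/-- Facility `i` lies on a 2-cycle of the connection graph, i.e. it is opened. -/
def opens [Fintype F] [Fintype C] (x : F → C → ℝ) (Q : F → ℝ) (R : C → ℝ) (i : F) : Prop :=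
  ∃ j : C, nextV x Q R (Sum.inl i) = some (Sum.inr j) ∧
    nextV x Q R (Sum.inr j) = some (Sum.inl i)

/-- A preprocessed fractional solution: `x i j ∈ {0, y i}`, `y i ∈ [0,1]`, and every client is
fully fractionally connected. -/
def Preprocessed [Fintype F] (x : F → C → ℝ) (y : F → ℝ) : Prop :=
  (∀ i j, x i j = 0 ∨ x i j = y i) ∧ (∀ i, y i ∈ Set.Icc (0:ℝ) 1) ∧ (∀ j, ∑ i, x i j = 1)

end

section Rounding

variable {F C : Type*}

lemma isMinOn_argminOn {α : Type*} (f : α → ℝ) (s : Finset α) (h : s.Nonempty) :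
    IsMinOn f s (argminOn f s h) :=
  isMinOn_iff.2 (Classical.choose_spec (s.exists_min_image f h)).2

lemma argminOn_mem {α : Type*} (f : α → ℝ) (s : Finset α) (h : s.Nonempty) :
    argminOn f s h ∈ s :=
  (Classical.choose_spec (s.exists_min_image f h)).1

@[simp]
lemma mem_facNbrs [Fintype F] {x : F → C → ℝ} {i : F} {j : C} :
    i ∈ facNbrs x j ↔ 0 < x i j := by
  simp [facNbrs]

@[simp]
lemma mem_cliNbrs [Fintype C] {x : F → C → ℝ} {i : F} {j : C} :
    j ∈ cliNbrs x i ↔ 0 < x i j := by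
  simp [cliNbrs]

lemma opens.exists_isMinOn [Fintype F] [Fintype C] {x : F → C → ℝ} {Q : F → ℝ} {R : C → ℝ}
    {i : F} (h : opens x Q R i) :
    ∃ j ∈ cliNbrs x i, IsMinOn R (cliNbrs x i) j ∧ IsMinOn Q (facNbrs x j) i := by
  obtain ⟨j, hi, hj⟩ := h
  rw [nextV] at hi
  rw [nextV] at hj
  split_ifs at hi hj with hN hM
  obtain rfl : argminOn R _ hN = j := by simpa using hi
  have hQ : argminOn Q _ hM = i := by simpa using hj
  have hmin := isMinOn_argminOn Q _ hM
  rw [hQ] at hmin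
  exact ⟨_, argminOn_mem R _ hN, isMinOn_argminOn R _ hN, hmin⟩

variable [Fintype F] {x : F → C → ℝ} {y o : F → ℝ}

lemma Preprocessed.nonneg (hpre : Preprocessed x y) (i : F) (j : C) : 0 ≤ x i j :=
  (hpre.1 i j).elim (·.ge) fun h => h ▸ (hpre.2.1 i).1

lemma Preprocessed.eq_of_pos (hpre : Preprocessed x y) (hyo : ∀ i, y i = 0 ∨ y i = o i)
    {i : F} {j : C} (h : 0 < x i j) : x i j = o i ∧ y i = o i := by
  have hxy : x i j = y i := (hpre.1 i j).resolve_left h.ne'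
  have hyo' : y i = o i := (hyo i).resolve_left (hxy ▸ h).ne'
  exact ⟨hxy.trans hyo', hyo'⟩

lemma Preprocessed.pos_of_pos (hpre : Preprocessed x y) (hyo : ∀ i, y i = 0 ∨ y i = o i)
    {i : F} {j : C} (h : 0 < x i j) : 0 < o i :=
  (hpre.eq_of_pos hyo h).1 ▸ h

lemma Preprocessed.sum_facNbrs (hpre : Preprocessed x y) (hyo : ∀ i, y i = 0 ∨ y i = o i)
    (j : C) : ∑ i ∈ facNbrs x j, o i = 1 := by
  calc ∑ i ∈ facNbrs x j, o i = ∑ i ∈ facNbrs x j, x i j :=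
        Finset.sum_congr rfl fun i hi => (hpre.eq_of_pos hyo (mem_facNbrs.1 hi)).1.symm
    _ = ∑ i, x i j := Finset.sum_subset (Finset.subset_univ _) fun i _ hi =>
        ((hpre.nonneg i j).lt_or_eq.resolve_left (mt mem_facNbrs.2 hi)).symm
    _ = 1 := hpre.2.2 j

variable {Ω : Type*} {Q : F → Ω → ℝ}

/-- Only the clocks of facilities with `0 < o i` are independent exponentials; preprocessing puts
every facility serving a client among them. -/
lemma ringsFirst_facNbrs_eq_subtype (hpre : Preprocessed x y) (hyo : ∀ i, y i = 0 ∨ y i = o i)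
    (j : C) {i : F} (hi : 0 < o i) :
    ringsFirst Q (facNbrs x j) i =
      ringsFirst (fun k : {i // 0 < o i} => Q k) ((facNbrs x j).subtype _) ⟨i, hi⟩ :=
  (ringsFirst_subtype (fun _ hk => hpre.pos_of_pos hyo (mem_facNbrs.1 hk)) hi).symm

lemma measure_ringsFirst_facNbrs [MeasurableSpace Ω] {μ : Measure Ω} [IsProbabilityMeasure μ]
    (hpre : Preprocessed x y) (hyo : ∀ i, y i = 0 ∨ y i = o i)
    (hQmeas : ∀ i, 0 < o i → Measurable (Q i))
    (hQind : iIndepFun (fun k : {i // 0 < o i} => Q k) μ)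
    (hQdist : ∀ i, 0 < o i → μ.map (Q i) = expMeasure (o i)) {i : F} {j : C} (hij : 0 < x i j) :
    μ (ringsFirst Q (facNbrs x j) i) = ENNReal.ofReal (o i) := by
  have hi := hpre.pos_of_pos hyo hij
  rw [ringsFirst_facNbrs_eq_subtype hpre hyo j hi,
    hQind.measure_ringsFirst (fun k => hQmeas k k.2) (Finset.mem_subtype.2 (mem_facNbrs.2 hij))
      (r := fun k => o k) (fun k _ => k.2) (fun k _ => hQdist k k.2),
    Finset.sum_subtype_of_mem o fun k hk => hpre.pos_of_pos hyo (mem_facNbrs.1 hk),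
    hpre.sum_facNbrs hyo j, div_one]

variable [Fintype C] {R : C → Ω → ℝ}

def openingEvent (x : F → C → ℝ) (Q : F → Ω → ℝ) (R : C → Ω → ℝ) (i : F) : Set Ω :=
  ⋃ j ∈ cliNbrs x i, ringsFirst R (cliNbrs x i) j ∩ ringsFirst Q (facNbrs x j) i

lemma setOf_opens_subset_openingEvent (i : F) :
    {ω | opens x (fun i => Q i ω) (fun j => R j ω) i} ⊆ openingEvent x Q R i := by
  intro ω hω
  obtain ⟨j, hj, hR, hQ⟩ := opens.exists_isMinOn hω
  exact Set.mem_biUnion hj ⟨hR, hQ⟩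

variable [MeasurableSpace Ω] {μ : Measure Ω} [IsProbabilityMeasure μ]

lemma measurableSet_openingEvent (hpre : Preprocessed x y) (hyo : ∀ i, y i = 0 ∨ y i = o i)
    (hQmeas : ∀ i, 0 < o i → Measurable (Q i)) (hRmeas : ∀ j, Measurable (R j)) (i : F) :
    MeasurableSet (openingEvent x Q R i) := by
  refine Finset.measurableSet_biUnion _ fun j hj =>
    (measurableSet_ringsFirst hRmeas _ _).inter ?_
  rw [ringsFirst_facNbrs_eq_subtype hpre hyo j (hpre.pos_of_pos hyo (mem_cliNbrs.1 hj))]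
  exact measurableSet_ringsFirst (fun k : {i // 0 < o i} => hQmeas k k.2) _ _

lemma measure_openingEvent_le (hpre : Preprocessed x y) (hyo : ∀ i, y i = 0 ∨ y i = o i)
    (hQmeas : ∀ i, 0 < o i → Measurable (Q i)) (hRmeas : ∀ j, Measurable (R j))
    (hindep : iIndepFun (fun v : {i // 0 < o i} ⊕ C => Sum.elim (fun i => Q i.1) R v) μ)
    (hQdist : ∀ i, 0 < o i → μ.map (Q i) = expMeasure (o i))
    (hRdist : ∀ j, μ.map (R j) = expMeasure 1) (i : F) :
    μ (openingEvent x Q R i) ≤ ENNReal.ofReal (y i) := by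
  rcases (cliNbrs x i).eq_empty_or_nonempty with hN | ⟨j₀, hj₀⟩
  · simp [openingEvent, hN]
  have hyi : y i = o i := (hpre.eq_of_pos hyo (mem_cliNbrs.1 hj₀)).2
  have hi : 0 < o i := hpre.pos_of_pos hyo (mem_cliNbrs.1 hj₀)
  have hW : ∀ v, Measurable (Sum.elim (fun i : {i // 0 < o i} => Q i) R v) := by
    rintro (⟨i, hi⟩ | j)
    exacts [hQmeas i hi, hRmeas j]
  have hQind : iIndepFun (fun k : {i // 0 < o i} => Q k) μ := hindep.precomp Sum.inl_injective
  have hRind : iIndepFun R μ := hindep.precomp (g := Sum.inr) Sum.inr_injective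
  have hsplit (j : C) : μ (ringsFirst R (cliNbrs x i) j ∩ ringsFirst Q (facNbrs x j) i) =
      μ (ringsFirst R (cliNbrs x i) j) * μ (ringsFirst Q (facNbrs x j) i) := by
    rw [ringsFirst_facNbrs_eq_subtype hpre hyo j hi, Set.inter_comm, mul_comm]
    exact hindep.measure_ringsFirst_inl_inter_inr hW _ _ _ _
  calc μ (openingEvent x Q R i)
      ≤ ∑ j ∈ cliNbrs x i, μ (ringsFirst R (cliNbrs x i) j ∩ ringsFirst Q (facNbrs x j) i) :=
        measure_biUnion_finset_le _ _
    _ = (∑ j ∈ cliNbrs x i, μ (ringsFirst R (cliNbrs x i) j)) * ENNReal.ofReal (o i) := by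
        rw [Finset.sum_mul]
        exact Finset.sum_congr rfl fun j hj => by
          rw [hsplit, measure_ringsFirst_facNbrs hpre hyo hQmeas hQind hQdist (mem_cliNbrs.1 hj)]
    _ ≤ ENNReal.ofReal (y i) := by
        rw [hyi]
        exact mul_le_of_le_one_left' (hRind.sum_measure_ringsFirst_le_one hRmeas _
          fun j _ => hRdist j ▸ inferInstance)

end Rounding

theorem expected_opening_cost_general
    {F C : Type*} [Fintype F] [Fintype C]
    (T : ℕ) (x : ℕ → F → C → ℝ) (y : ℕ → F → ℝ) (o : F → ℝ)
    (hpre : ∀ t', t' < T → Preprocessed (x t') (y t'))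
    (hyo : ∀ t', t' < T → ∀ i, y t' i = 0 ∨ y t' i = o i)
    (f : F → ℝ) (hf : ∀ i, 0 ≤ f i)
    {Ω : Type*} [MeasurableSpace Ω] (μ : Measure Ω) [IsProbabilityMeasure μ]
    (Q : F → Ω → ℝ) (R : C → Ω → ℝ)
    (hQmeas : ∀ i : F, 0 < o i → Measurable (Q i))
    (hRmeas : ∀ j : C, Measurable (R j))
    (hindep : iIndepFun
      (fun v : {i : F // 0 < o i} ⊕ C => Sum.elim (fun i => Q i.1) R v) μ)
    (hQdist : ∀ i : F, (h : 0 < o i) → Measure.map (Q i) μ = expMeasure (o i))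
    (hRdist : ∀ j : C, Measure.map (R j) μ = expMeasure 1)
    (t : ℕ) (ht : t < T) :
    ∫ ω, (∑ i : F,
        f i * (if opens (x t) (fun i' => Q i' ω) (fun j' => R j' ω) i
               then (1 : ℝ) else 0)) ∂μ ≤
      ∑ i : F, f i * y t i := by
  have hpre' := hpre t ht
  have hyo' := hyo t ht
  have hmeas (i : F) : MeasurableSet (openingEvent (x t) Q R i) :=
    measurableSet_openingEvent hpre' hyo' hQmeas hRmeas i
  have hint (i : F) : Integrable (fun ω => f i * (openingEvent (x t) Q R i).indicator 1 ω) μ :=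
    ((integrable_const (1 : ℝ)).indicator (hmeas i)).const_mul (f i)
  calc ∫ ω, (∑ i : F, f i * (if opens (x t) (fun i' => Q i' ω) (fun j' => R j' ω) i
          then (1 : ℝ) else 0)) ∂μ
      ≤ ∫ ω, ∑ i : F, f i * (openingEvent (x t) Q R i).indicator 1 ω ∂μ := by
        refine integral_mono_of_nonneg (ae_of_all _ fun ω => ?_)
          (integrable_finsetSum _ fun i _ => hint i) (ae_of_all _ fun ω => ?_)
        · exact Finset.sum_nonneg fun i _ => mul_nonneg (hf i) (by positivity)
        · refine Finset.sum_le_sum fun i _ => mul_le_mul_of_nonneg_left ?_ (hf i)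
          split_ifs with h
          · exact (Set.indicator_of_mem (setOf_opens_subset_openingEvent i h) (1 : Ω → ℝ)).ge
          · exact Set.indicator_nonneg (fun _ _ => zero_le_one) ω
    _ = ∑ i : F, f i * μ.real (openingEvent (x t) Q R i) := by
        rw [integral_finsetSum _ fun i _ => hint i]
        simp only [integral_const_mul, integral_indicator_one (hmeas _)]
    _ ≤ ∑ i : F, f i * y t i := Finset.sum_le_sum fun i _ => mul_le_mul_of_nonneg_left
        (ENNReal.toReal_le_of_le_ofReal (hpre'.2.1 i).1
          (measure_openingEvent_le hpre' hyo' hQmeas hRmeas hindep hQdist hRdist i)) (hf i)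

theorem expected_opening_cost
    {F C : Type*} [Fintype F] [Fintype C] [DecidableEq F] [DecidableEq C]
    (T : ℕ) (x : ℕ → F → C → ℝ) (y : ℕ → F → ℝ) (o : F → ℝ)
    (hpre : ∀ t', t' < T → Preprocessed (x t') (y t'))
    (ho : ∀ i, o i ∈ Set.Icc (0:ℝ) 1)
    (hyo : ∀ t', t' < T → ∀ i, y t' i = 0 ∨ y t' i = o i)
    (f : F → ℝ) (hf : ∀ i, 0 ≤ f i)
    {Ω : Type*} [MeasurableSpace Ω] (μ : Measure Ω) [IsProbabilityMeasure μ]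
    (Q : F → Ω → ℝ) (R : C → Ω → ℝ)
    (hQmeas : ∀ i : F, 0 < o i → Measurable (Q i))
    (hRmeas : ∀ j : C, Measurable (R j))
    (hindep : iIndepFun
      (fun v : {i : F // 0 < o i} ⊕ C => Sum.elim (fun i => Q i.1) R v) μ)
    (hQdist : ∀ i : F, (h : 0 < o i) → Measure.map (Q i) μ = expMeasure (o i))
    (hRdist : ∀ j : C, Measure.map (R j) μ = expMeasure 1)
    (t : ℕ) (ht : t < T) :
    ∫ ω, (∑ i : F,
        f i * (if opens (x t) (fun i' => Q i' ω) (fun j' => R j' ω) i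
               then (1 : ℝ) else 0)) ∂μ ≤
      ∑ i : F, f i * y t i :=
  expected_opening_cost_general T x y o hpre hyo f hf μ Q R hQmeas hRmeas hindep hQdist hRdist t ht

end DFL11
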